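/- Suppose a ∈ A lies in the closure of M ∖ A, and w₁, w₂ ∈ W are distinct points with p(w₁) = p(w₂) = a. Then q(w₁) ≠ q(w₂), and every open subset of X containing q(w₁) intersects every open subset of X containing q(w₂). In particular, X is not Hausdorff. -/
import Mathlib


/-- The relation `s` on `W` induced by `p : W → M` and `A ⊆ M`:
`s w w'` iff `w = w'`, or (`p w = p w'` and `p w ∉ A`). -/
def coverRel {W M : Type*} (p : W → M) (A : Set M) (w w' : W) : Prop :=
  w = w' ∨ (p w = p w' ∧ p w ∉ A)

lemma coverRel_equiv {W M : Type*} (p : W → M) (A : Set M) :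
    Equivalence (coverRel p A) := by
  constructor
  · intro x; exact Or.inl rfl
  · rintro x y (rfl | ⟨h, hn⟩)
    · exact Or.inl rfl
    · exact Or.inr ⟨h.symm, h ▸ hn⟩
  · rintro x y z (rfl | ⟨h, hn⟩) (rfl | ⟨h', hn'⟩)
    · exact Or.inl rfl
    · exact Or.inr ⟨h', hn'⟩
    · exact Or.inr ⟨h, hn⟩
    · exact Or.inr ⟨h.trans h', hn⟩

/-- if `a ∈ A` lies in the closure of `M ∖ A` and `w₁ ≠ w₂` are points
of `W` with `p w₁ = p w₂ = a`, then `q w₁ ≠ q w₂`, and every open subset of `X = W/s`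
containing `q w₁` intersects every open subset containing `q w₂`; in particular `X` is
not Hausdorff. -/
theorem stmt_16 {W M : Type*} [TopologicalSpace W] [TopologicalSpace M]
    (p : W → M) (hp : IsCoveringMap p) (A : Set M)
    (a : M) (ha : a ∈ A) (hacl : a ∈ closure (Set.univ \ A))
    (w₁ w₂ : W) (hw : w₁ ≠ w₂) (h₁ : p w₁ = a) (h₂ : p w₂ = a) :
    Quot.mk (coverRel p A) w₁ ≠ Quot.mk (coverRel p A) w₂ ∧
    (∀ O₁ O₂ : Set (Quot (coverRel p A)), IsOpen O₁ → IsOpen O₂ →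
      Quot.mk (coverRel p A) w₁ ∈ O₁ → Quot.mk (coverRel p A) w₂ ∈ O₂ →
      (O₁ ∩ O₂).Nonempty) ∧
    ¬ T2Space (Quot (coverRel p A)) := by
  have hne : Quot.mk (coverRel p A) w₁ ≠ Quot.mk (coverRel p A) w₂ := by
    intro h
    have := (Quot.eq.mp h)
    rw [(coverRel_equiv p A).eqvGen_iff] at this
    rcases this with rfl | ⟨_, hn⟩
    · exact hw rfl
    · exact hn (h₁ ▸ ha)
  have hmeet : ∀ O₁ O₂ : Set (Quot (coverRel p A)), IsOpen O₁ → IsOpen O₂ →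
      Quot.mk (coverRel p A) w₁ ∈ O₁ → Quot.mk (coverRel p A) w₂ ∈ O₂ →
      (O₁ ∩ O₂).Nonempty := by
    intro O₁ O₂ hO₁ hO₂ hm₁ hm₂
    have hq : Continuous (Quot.mk (coverRel p A)) := continuous_quot_mk
    have hU₁ : IsOpen (Quot.mk (coverRel p A) ⁻¹' O₁) := hO₁.preimage hq
    have hU₂ : IsOpen (Quot.mk (coverRel p A) ⁻¹' O₂) := hO₂.preimage hq
    have hopen := hp.isOpenMap
    have hV : IsOpen (p '' (Quot.mk (coverRel p A) ⁻¹' O₁) ∩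
        p '' (Quot.mk (coverRel p A) ⁻¹' O₂)) :=
      (hopen _ hU₁).inter (hopen _ hU₂)
    have haV : a ∈ p '' (Quot.mk (coverRel p A) ⁻¹' O₁) ∩
        p '' (Quot.mk (coverRel p A) ⁻¹' O₂) :=
      ⟨⟨w₁, hm₁, h₁⟩, ⟨w₂, hm₂, h₂⟩⟩
    have := mem_closure_iff.mp hacl _ hV haV
    obtain ⟨m, ⟨⟨u₁, hu₁, hpu₁⟩, ⟨u₂, hu₂, hpu₂⟩⟩, _, hmA⟩ := this
    have hrel : coverRel p A u₁ u₂ :=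
      Or.inr ⟨hpu₁.trans hpu₂.symm, hpu₁ ▸ hmA⟩
    have : Quot.mk (coverRel p A) u₁ = Quot.mk (coverRel p A) u₂ := Quot.sound hrel
    exact ⟨Quot.mk (coverRel p A) u₁, hu₁, this ▸ hu₂⟩
  refine ⟨hne, hmeet, ?_⟩
  intro hT2
  obtain ⟨O₁, O₂, hO₁, hO₂, hm₁, hm₂, hdisj⟩ := t2_separation hne
  obtain ⟨x, hx⟩ := hmeet O₁ O₂ hO₁ hO₂ hm₁ hm₂
  exact absurd hx (Set.disjoint_iff.mp hdisj hx).elim
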